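/- arXiv:1704.08554 — 4 statements merged into one kernel-verified Lean document; each statement's English description precedes it below -/
import Mathlib

section
/- A topological group G has the SSGP property if and only if G = ⋃_{k ∈ ℕ⁺} W · ⟨Cyc(W)⟩_k for every neighbourhood W of the identity of G, where ⟨A⟩_k denotes the set of products of at most k elements of A. -/
open Filter Pointwise

/-- `Cyc A` is the set of elements whose generated cyclic subgroup lies inside `A`. -/
def Cyc {G : Type*} [Group G] (A : Set G) : Set G :=
  {x : G | (Subgroup.zpowers x : Set G) ⊆ A}

/-- `prodBdd A k` is the set `⟨A⟩_k` of products of at most `k` elements of `A`. -/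
def prodBdd {G : Type*} [Group G] (A : Set G) (k : ℕ) : Set G :=
  {x : G | ∃ j ≤ k, ∃ f : Fin j → G, (∀ i, f i ∈ A) ∧ x = (List.ofFn f).prod}

/-- A topological group has the small subgroup generating property if
`⟨Cyc U⟩` is dense for every neighbourhood `U` of the identity. -/
def SSGP (G : Type*) [Group G] [TopologicalSpace G] : Prop :=
  ∀ U ∈ nhds (1 : G), Dense (Subgroup.closure (Cyc U) : Set G)

open Topology

/-!
Since `Cyc W` is symmetric, `⋃ₖ ⟨Cyc W⟩ₖ` is the subgroup generated by `Cyc W`, so the condition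
says `W ⋅ ⟨Cyc W⟩ = G`. In a topological group a set `s` is dense iff `W ⋅ s = G` for every
neighbourhood `W` of `1`; shrinking `W` to `W ∩ U` (which only shrinks `Cyc`) lets one neighbourhood
play both roles.
-/

section Group

variable {G : Type*} [Group G]

lemma Cyc_mono {A B : Set G} (h : A ⊆ B) : Cyc A ⊆ Cyc B :=
  fun _ hx => hx.trans h

lemma Cyc_inv_subset (A : Set G) : (Cyc A)⁻¹ ⊆ Cyc A := by
  intro x hx
  simpa [Cyc, Subgroup.zpowers_inv] using hx

lemma prodBdd_subset_closure (A : Set G) (k : ℕ) : prodBdd A k ⊆ Subgroup.closure A := by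
  rintro _ ⟨j, -, f, hf, rfl⟩
  refine list_prod_mem fun x hx => ?_
  obtain ⟨i, rfl⟩ := List.mem_ofFn.mp hx
  exact Subgroup.subset_closure (hf i)

lemma exists_pos_mem_prodBdd_of_mem_closure {A : Set G} (hA : A⁻¹ ⊆ A) {x : G}
    (hx : x ∈ Subgroup.closure A) : ∃ k, 0 < k ∧ x ∈ prodBdd A k := by
  have hx' : x ∈ (Subgroup.closure A).toSubmonoid := hx
  rw [Subgroup.closure_toSubmonoid] at hx'
  obtain ⟨l, hl, rfl⟩ := Submonoid.exists_list_of_mem_closure hx'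
  refine ⟨l.length + 1, l.length.succ_pos, l.length, l.length.le_succ, l.get, fun i => ?_, ?_⟩
  · rcases hl _ (l.get_mem i) with h | h
    exacts [h, hA h]
  · rw [List.ofFn_get]

lemma iUnion_pos_prodBdd_eq_closure {A : Set G} (hA : A⁻¹ ⊆ A) :
    ⋃ (k : ℕ) (_ : 0 < k), prodBdd A k = Subgroup.closure A := by
  refine Set.Subset.antisymm (Set.iUnion₂_subset fun k _ => prodBdd_subset_closure A k) ?_
  intro x hx
  obtain ⟨k, hk, hxk⟩ := exists_pos_mem_prodBdd_of_mem_closure hA hx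
  exact Set.mem_iUnion₂.mpr ⟨k, hk, hxk⟩

end Group

section TopologicalGroup

variable {G : Type*} [Group G] [TopologicalSpace G] [IsTopologicalGroup G]

lemma dense_iff_forall_nhds_one_mul_eq_univ {s : Set G} :
    Dense s ↔ ∀ W ∈ 𝓝 (1 : G), W * s = Set.univ := by
  simp only [Dense, mem_closure_iff_nhds_one, Set.eq_univ_iff_forall, Set.mem_mul]
  constructor
  · intro hs W hW x
    obtain ⟨y, hy, hyx⟩ := hs x W⁻¹ (inv_mem_nhds_one G hW)
    exact ⟨x / y, by simpa using hyx, y, hy, div_mul_cancel x y⟩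
  · intro hs x U hU
    obtain ⟨w, hw, y, hy, rfl⟩ := hs U⁻¹ (inv_mem_nhds_one G hU) x
    exact ⟨y, hy, by simpa using hw⟩

lemma ssgp_iff_forall_nhds_one_mul_closure_Cyc_eq_univ :
    SSGP G ↔ ∀ W ∈ 𝓝 (1 : G), W * (Subgroup.closure (Cyc W) : Set G) = Set.univ := by
  refine ⟨fun h W hW => dense_iff_forall_nhds_one_mul_eq_univ.mp (h W hW) W hW, ?_⟩
  intro h U hU
  refine dense_iff_forall_nhds_one_mul_eq_univ.mpr fun W hW => Set.eq_univ_of_univ_subset ?_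
  rw [← h (W ∩ U) (inter_mem hW hU)]
  exact Set.mul_subset_mul Set.inter_subset_left
    (Subgroup.closure_mono (Cyc_mono Set.inter_subset_right))

end TopologicalGroup

/-- `G` is SSGP iff `G = ⋃_{k ∈ ℕ⁺} W ⋅ ⟨Cyc W⟩_k` for every neighbourhood `W`
of the identity of `G`. -/
theorem stmt_3 (G : Type*) [Group G] [TopologicalSpace G] [IsTopologicalGroup G] :
    SSGP G ↔
      ∀ W ∈ nhds (1 : G),
        (⋃ (k : ℕ) (_ : 0 < k), W * prodBdd (Cyc W) k) = (Set.univ : Set G) := by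
  simp_rw [← Set.mul_iUnion₂, iUnion_pos_prodBdd_eq_closure (Cyc_inv_subset _)]
  exact ssgp_iff_forall_nhds_one_mul_closure_Cyc_eq_univ
end

section
/- Let s ∈ ℤ, k ∈ ℕ⁺, g₁,…,g_k ∈ ℚ^m, and let π₀ ⊆ π₁ ⊆ ⋯ ⊆ π_k be finite sets of primes such that for every j = 1,…,k: (a) g_j ∈ Q_{π_j}^m, and (b) ⟨g_j⟩ ∩ Q_{π_{j-1}}^m ⊆ (sℤ)^m. Then ⟨{g_i,…,g_k}⟩ ∩ Q_{π_{i-1}}^m ⊆ (sℤ)^m for every i = 1,…,k. -/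
open Pointwise

/-- Rationals whose reduced denominator has all prime divisors in the finite set `π`. -/
def QpiSet (π : Finset ℕ) : Set ℚ := {q : ℚ | ∀ p : ℕ, p.Prime → p ∣ q.den → p ∈ π}

/-- The subset `Q_π^m` of `ℚ^m`. -/
def QpiVec (m : ℕ) (π : Finset ℕ) : Set (Fin m → ℚ) := {v | ∀ i, v i ∈ QpiSet π}

/-- The subset `(sℤ)^m` of `ℚ^m`. -/
def intVec (m : ℕ) (s : ℤ) : Set (Fin m → ℚ) := {v | ∀ i, ∃ z : ℤ, v i = (s : ℚ) * z}

/-!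
Downward induction on `i`. Write `x ∈ ⟨g_i⟩ + ⟨g_{i+1}, …, g_k⟩` with `x ∈ Q_{π_{i-1}}^m` as
`x = a + b`. Since `a ∈ Q_{π_i}^m` by (a) and `π_{i-1} ⊆ π_i`, also `b ∈ Q_{π_i}^m`, so `b ∈ (sℤ)^m` by the
induction hypothesis. Integer vectors lie in every `Q_π^m`, hence `a = x - b ∈ Q_{π_{i-1}}^m`, and
`a ∈ (sℤ)^m` by (b).
-/

theorem AddSubgroup.sup_inf_le_of_inf_le {G : Type*} [AddCommGroup G]
    {K H Q Q' S : AddSubgroup G} (hQ : Q ≤ Q') (hS : S ≤ Q) (hK : K ≤ Q')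
    (hKS : K ⊓ Q ≤ S) (hHS : H ⊓ Q' ≤ S) : (K ⊔ H) ⊓ Q ≤ S := by
  rintro x ⟨hx, hxQ⟩
  obtain ⟨a, ha, b, hb, rfl⟩ := AddSubgroup.mem_sup.mp hx
  have hbS : b ∈ S := hHS ⟨hb, by simpa using Q'.sub_mem (hQ hxQ) (hK ha)⟩
  have haS : a ∈ S := hKS ⟨ha, by simpa using Q.sub_mem hxQ (hS hbS)⟩
  exact S.add_mem haS hbS

theorem AddSubgroup.closure_image_Icc_eq_sup {G : Type*} [AddGroup G] (g : ℕ → G)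
    {i k : ℕ} (h : i ≤ k) :
    closure (g '' Set.Icc i k) = zmultiples (g i) ⊔ closure (g '' Set.Icc (i + 1) k) := by
  rw [← Set.insert_Icc_add_one_left_eq_Icc h, Set.image_insert_eq, ← Set.singleton_union,
    closure_union, zmultiples_eq_closure]

theorem AddSubgroup.closure_image_Icc_inf_le {G : Type*} [AddCommGroup G] (g : ℕ → G)
    (Q : ℕ → AddSubgroup G) (S : AddSubgroup G) {k : ℕ} (hQ : ∀ j < k, Q j ≤ Q (j + 1))
    (hS : ∀ j, S ≤ Q j) (hg : ∀ j, 1 ≤ j → j ≤ k → g j ∈ Q j)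
    (hgS : ∀ j, 1 ≤ j → j ≤ k → zmultiples (g j) ⊓ Q (j - 1) ≤ S) {i : ℕ} (hi : 1 ≤ i)
    (hik : i ≤ k) : closure (g '' Set.Icc i k) ⊓ Q (i - 1) ≤ S := by
  induction hik using Nat.decreasingInduction with
  | self => simpa [zmultiples_eq_closure] using hgS k hi le_rfl
  | of_succ j hjk ih =>
    specialize ih (by omega)
    rw [closure_image_Icc_eq_sup g hjk.le]
    refine sup_inf_le_of_inf_le (Q' := Q j) ?_ (hS _) (zmultiples_le.mpr (hg j hi hjk.le))
      (hgS j hi hjk.le) (by simpa using ih)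
    simpa [Nat.sub_add_cancel hi] using hQ (j - 1) (by omega)

theorem mem_QpiSet_of_den_eq_one {π : Finset ℕ} {q : ℚ} (hq : q.den = 1) : q ∈ QpiSet π :=
  fun _ hp hd => absurd (Nat.dvd_one.mp (hq ▸ hd)) hp.ne_one

theorem QpiSet_mono {π π' : Finset ℕ} (h : π ⊆ π') : QpiSet π ⊆ QpiSet π' :=
  fun _ hq p hp hd => h (hq p hp hd)

def qpiAddSubgroup (π : Finset ℕ) : AddSubgroup ℚ where
  carrier := QpiSet π
  zero_mem' := mem_QpiSet_of_den_eq_one Rat.den_zero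
  add_mem' {a b} ha hb p hp hd := (hp.dvd_mul.mp (hd.trans (Rat.add_den_dvd a b))).elim
    (ha p hp) (hb p hp)
  neg_mem' {a} ha := by simpa [QpiSet, Rat.den_neg_eq_den] using ha

def qpiVecAddSubgroup (m : ℕ) (π : Finset ℕ) : AddSubgroup (Fin m → ℚ) :=
  AddSubgroup.pi Set.univ fun _ => qpiAddSubgroup π

def intVecAddSubgroup (m : ℕ) (s : ℤ) : AddSubgroup (Fin m → ℚ) :=
  AddSubgroup.pi Set.univ fun _ => AddSubgroup.zmultiples (s : ℚ)

theorem coe_qpiVecAddSubgroup (m : ℕ) (π : Finset ℕ) :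
    (qpiVecAddSubgroup m π : Set (Fin m → ℚ)) = QpiVec m π := by
  ext v
  simp only [qpiVecAddSubgroup, SetLike.mem_coe, AddSubgroup.mem_pi, Set.mem_univ, true_implies]
  rfl

theorem coe_intVecAddSubgroup (m : ℕ) (s : ℤ) :
    (intVecAddSubgroup m s : Set (Fin m → ℚ)) = intVec m s := by
  ext v
  simp [intVecAddSubgroup, AddSubgroup.mem_pi, intVec, AddSubgroup.mem_zmultiples_iff, eq_comm,
    mul_comm]

theorem qpiVecAddSubgroup_mono (m : ℕ) {π π' : Finset ℕ} (h : π ⊆ π') :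
    qpiVecAddSubgroup m π ≤ qpiVecAddSubgroup m π' := fun _ hv i _ =>
  QpiSet_mono h (hv i trivial)

theorem intVecAddSubgroup_le_qpiVecAddSubgroup (m : ℕ) (s : ℤ) (π : Finset ℕ) :
    intVecAddSubgroup m s ≤ qpiVecAddSubgroup m π := fun _ hv i _ =>
  AddSubgroup.zmultiples_le.mpr (mem_QpiSet_of_den_eq_one (Rat.den_intCast s)) (hv i trivial)

theorem stmt_6_general (m : ℕ) (s : ℤ) (k : ℕ)
    (g : ℕ → Fin m → ℚ) (π : ℕ → Finset ℕ)
    (hmono : ∀ j < k, π j ⊆ π (j + 1))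
    (ha : ∀ j, 1 ≤ j → j ≤ k → g j ∈ QpiVec m (π j))
    (hb : ∀ j, 1 ≤ j → j ≤ k →
      (AddSubgroup.zmultiples (g j) : Set (Fin m → ℚ)) ∩ QpiVec m (π (j - 1)) ⊆ intVec m s) :
    ∀ i, 1 ≤ i → i ≤ k →
      (AddSubgroup.closure {x : Fin m → ℚ | ∃ j, i ≤ j ∧ j ≤ k ∧ x = g j} :
        Set (Fin m → ℚ)) ∩ QpiVec m (π (i - 1)) ⊆ intVec m s := by
  simp_rw [← coe_qpiVecAddSubgroup, ← coe_intVecAddSubgroup, ← AddSubgroup.coe_inf,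
    SetLike.coe_subset_coe, SetLike.mem_coe] at ha hb ⊢
  intro i hi hik
  have hgens : {x : Fin m → ℚ | ∃ j, i ≤ j ∧ j ≤ k ∧ x = g j} = g '' Set.Icc i k := by
    ext x
    simp [eq_comm, and_assoc]
  rw [hgens]
  exact AddSubgroup.closure_image_Icc_inf_le g (fun j => qpiVecAddSubgroup m (π j))
    (intVecAddSubgroup m s) (fun j hj => qpiVecAddSubgroup_mono m (hmono j hj))
    (fun j => intVecAddSubgroup_le_qpiVecAddSubgroup m s (π j)) ha hb hi hik

/-- Lemma 5.2(A)(ii): under conditions (a_j), (b_j),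
`⟨{g_i,…,g_k}⟩ ∩ Q_{π_{i-1}}^m ⊆ (sℤ)^m` for every `i = 1,…,k`. -/
theorem stmt_6 (m : ℕ) (s : ℤ) (k : ℕ) (hk : 0 < k)
    (g : ℕ → Fin m → ℚ) (π : ℕ → Finset ℕ)
    (hπ : ∀ j ≤ k, ∀ p ∈ π j, Nat.Prime p)
    (hmono : ∀ j < k, π j ⊆ π (j + 1))
    (ha : ∀ j, 1 ≤ j → j ≤ k → g j ∈ QpiVec m (π j))
    (hb : ∀ j, 1 ≤ j → j ≤ k →
      (AddSubgroup.zmultiples (g j) : Set (Fin m → ℚ)) ∩ QpiVec m (π (j - 1)) ⊆ intVec m s) :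
    ∀ i, 1 ≤ i → i ≤ k →
      (AddSubgroup.closure {x : Fin m → ℚ | ∃ j, i ≤ j ∧ j ≤ k ∧ x = g j} :
        Set (Fin m → ℚ)) ∩ QpiVec m (π (i - 1)) ⊆ intVec m s :=
  stmt_6_general m s k g π hmono ha hb
end

section
/- Under the hypotheses: s ∈ ℤ, k ∈ ℕ⁺, g₁,…,g_k ∈ ℚ^m, finite prime sets π₀ ⊆ ⋯ ⊆ π_k with g_j ∈ Q_{π_j}^m, ⟨g_j⟩ ∩ Q_{π_{j-1}}^m ⊆ (sℤ)^m, and additionally n·g_j ∉ Q_{π_{j-1}}^m for every nonzero integer n with |n| ≤ k and every j = 1,…,k; if g ∈ Q_{π₀}^m, J is a proper subset of {1,…,k}, l ∈ ℤ with |l| ≤ k, g₀ = g − (g₁ + ⋯ + g_k), and l·g₀ ∈ ⟨{g_j : j ∈ J}⟩ + Q_{π₀}^m, then l = 0. -/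
open Pointwise

/-!
Write `l • g₀ = ∑_{j ∈ J} c_j • g_j + q` with `q ∈ Q_{π₀}^m`; then the terms
`x_j = d_j • g_j` with `d_j = -l - [j ∈ J] c_j` sum to an element of `Q_{π₀}^m`.
Suppose `l ≠ 0` and peel off the term of largest index `j`: all other terms lie in
`Q_{π_{j-1}}^m`, hence so does `x_j`. If `j ∈ J`, hypothesis `hb` puts `x_j` in
`(sℤ)^m ⊆ Q_{π₀}^m`; if `j ∉ J`, then `d_j = -l` and `hc` rules this out. Inductively every
`x_j` lies in `Q_{π₀}^m`, which `hc` forbids at an index `j ∉ J`.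
-/

theorem AddSubgroup.forall_mem_of_sum_mem_of_monotoneOn {G : Type*} [AddCommGroup G]
    {H : ℕ → AddSubgroup G} {n : ℕ} (hH : MonotoneOn H (Set.Iic n)) {x : ℕ → G}
    (T : Finset ℕ) (hTn : ∀ j ∈ T, j ≤ n) (hx : ∀ j ∈ T, x j ∈ H j)
    (hdesc : ∀ j ∈ T, x j ∈ H (j - 1) → x j ∈ H 0)
    (hsum : ∑ j ∈ T, x j ∈ H 0) : ∀ j ∈ T, x j ∈ H 0 := by
  induction T using Finset.induction_on_max with
  | empty => simp
  | insert a T hlt ih =>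
    simp only [Finset.forall_mem_insert] at hTn hx hdesc ⊢
    rw [Finset.sum_insert fun ha => (hlt a ha).false] at hsum
    have hprev : a - 1 ≤ n := (Nat.sub_le a 1).trans hTn.1
    have hle : ∀ {i}, i ≤ a - 1 → H i ≤ H (a - 1) := fun hi =>
      hH (Set.mem_Iic.mpr (hi.trans hprev)) hprev hi
    have hrest : ∑ j ∈ T, x j ∈ H (a - 1) := AddSubgroup.sum_mem _ fun j hj =>
      hle (Nat.le_sub_one_of_lt (hlt j hj)) (hx.2 j hj)
    have hxa : x a ∈ H 0 := by
      refine hdesc.1 ?_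
      simpa using sub_mem (hle (Nat.zero_le _) hsum) hrest
    exact ⟨hxa, ih hTn.2 hx.2 hdesc.2 (by simpa using sub_mem hsum hxa)⟩

theorem exists_sum_zsmul_of_mem_closure {M ι : Type*} [AddCommGroup M] (g : ι → M)
    (J : Finset ι) {y : M} (hy : y ∈ AddSubgroup.closure {x : M | ∃ j ∈ J, x = g j}) :
    ∃ c : ι → ℤ, ∑ j ∈ J, c j • g j = y := by
  have hset : {x : M | ∃ j ∈ J, x = g j} = g '' J := by
    ext x
    simp [eq_comm]
  rw [hset, ← Submodule.span_int_eq_addSubgroupClosure, Submodule.mem_toAddSubgroup] at hy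
  exact (Submodule.mem_span_image_finset_iff_exists_fun' ℤ).mp hy

theorem exists_sum_zsmul_mem_of_zsmul_sub_sum_mem {M ι : Type*} [AddCommGroup M]
    {K : AddSubgroup M} {g : ι → M} {I J : Finset ι} (hJI : J ⊆ I) {a : M} (ha : a ∈ K)
    {l : ℤ} (h : l • (a - ∑ j ∈ I, g j) ∈
      (AddSubgroup.closure {x : M | ∃ j ∈ J, x = g j} : Set M) + K) :
    ∃ d : ι → ℤ, (∀ j ∉ J, d j = -l) ∧ ∑ j ∈ I, d j • g j ∈ K := by
  classical
  obtain ⟨y, hy, q, hq, hyq⟩ := Set.mem_add.mp h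
  obtain ⟨c, rfl⟩ := exists_sum_zsmul_of_mem_closure g J hy
  refine ⟨fun j => -l - if j ∈ J then c j else 0, fun j hj => by simp [hj], ?_⟩
  have hsum : ∑ j ∈ I, (-l - if j ∈ J then c j else 0) • g j = q - l • a := by
    simp only [sub_smul, Finset.sum_sub_distrib, ← Finset.smul_sum, ite_smul, zero_smul,
      Finset.sum_ite_mem, Finset.inter_eq_right.mpr hJI]
    linear_combination (norm := module) -hyq
  rw [hsum]
  exact sub_mem hq (zsmul_mem ha l)

theorem QpiSet.intCast_mem (π : Finset ℕ) (z : ℤ) : (z : ℚ) ∈ QpiSet π := by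
  intro p hp hd
  rw [Rat.den_intCast, Nat.dvd_one] at hd
  exact absurd hd hp.ne_one

theorem QpiSet.add_mem {π : Finset ℕ} {a b : ℚ} (ha : a ∈ QpiSet π) (hb : b ∈ QpiSet π) :
    a + b ∈ QpiSet π := fun p hp hd =>
  (hp.dvd_mul.mp (hd.trans (Rat.add_den_dvd a b))).elim (ha p hp) (hb p hp)

theorem QpiSet.neg_mem {π : Finset ℕ} {a : ℚ} (ha : a ∈ QpiSet π) : -a ∈ QpiSet π := by
  simpa [QpiSet] using ha

def QpiVec.addSubgroup (m : ℕ) (π : Finset ℕ) : AddSubgroup (Fin m → ℚ) where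
  carrier := QpiVec m π
  zero_mem' := fun _ => by exact_mod_cast QpiSet.intCast_mem π 0
  add_mem' := fun hu hv i => QpiSet.add_mem (hu i) (hv i)
  neg_mem' := fun hu i => QpiSet.neg_mem (hu i)

theorem QpiVec.addSubgroup_mono (m : ℕ) : Monotone (QpiVec.addSubgroup m) :=
  fun _ _ h _ hv i p hp hd => h (hv i p hp hd)

theorem intVec_subset_QpiVec (m : ℕ) (s : ℤ) (π : Finset ℕ) : intVec m s ⊆ QpiVec m π := by
  intro v hv i
  obtain ⟨z, hz⟩ := hv i
  rw [hz]
  exact_mod_cast QpiSet.intCast_mem π (s * z)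

theorem stmt_7_general (m : ℕ) (s : ℤ) (k : ℕ)
    (g : ℕ → Fin m → ℚ) (π : ℕ → Finset ℕ)
    (hmono : ∀ j < k, π j ⊆ π (j + 1))
    (ha : ∀ j, 1 ≤ j → j ≤ k → g j ∈ QpiVec m (π j))
    (hb : ∀ j, 1 ≤ j → j ≤ k →
      (AddSubgroup.zmultiples (g j) : Set (Fin m → ℚ)) ∩ QpiVec m (π (j - 1)) ⊆ intVec m s)
    (hc : ∀ j, 1 ≤ j → j ≤ k → ∀ n : ℤ, n ≠ 0 → |n| ≤ (k : ℤ) →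
      n • g j ∉ QpiVec m (π (j - 1)))
    (a : Fin m → ℚ) (haπ : a ∈ QpiVec m (π 0))
    (J : Finset ℕ) (hJ : J ⊂ Finset.Icc 1 k)
    (l : ℤ) (hl : |l| ≤ (k : ℤ))
    (g₀ : Fin m → ℚ) (hg₀ : g₀ = a - ∑ j ∈ Finset.Icc 1 k, g j)
    (hmem : l • g₀ ∈
      (AddSubgroup.closure {x : Fin m → ℚ | ∃ j ∈ J, x = g j} : Set (Fin m → ℚ))
        + QpiVec m (π 0)) :
    l = 0 := by
  classical
  obtain ⟨d, hd_out, hsum⟩ := exists_sum_zsmul_mem_of_zsmul_sub_sum_mem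
    (K := QpiVec.addSubgroup m (π 0)) hJ.subset haπ (hg₀ ▸ hmem)
  have hH : MonotoneOn (fun j => QpiVec.addSubgroup m (π j)) (Set.Iic k) :=
    (QpiVec.addSubgroup_mono m).comp_monotoneOn <|
      monotoneOn_of_le_succ Set.ordConnected_Iic fun j _ _ hj =>
        hmono j (Order.succ_le_iff.mp (Set.mem_Iic.mp hj))
  by_contra hl0
  have hout : ∀ j ∈ Finset.Icc 1 k, j ∉ J → d j • g j ∉ QpiVec m (π (j - 1)) := by
    intro j hj hjJ
    rw [hd_out j hjJ]
    exact hc j (Finset.mem_Icc.mp hj).1 (Finset.mem_Icc.mp hj).2 (-l) (neg_ne_zero.mpr hl0)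
      (by rwa [abs_neg])
  have hterms := AddSubgroup.forall_mem_of_sum_mem_of_monotoneOn hH (Finset.Icc 1 k)
    (fun j hj => (Finset.mem_Icc.mp hj).2)
    (fun j hj => zsmul_mem (ha j (Finset.mem_Icc.mp hj).1 (Finset.mem_Icc.mp hj).2) _)
    (fun j hj hprev => by
      by_cases hjJ : j ∈ J
      · exact intVec_subset_QpiVec m s _ (hb j (Finset.mem_Icc.mp hj).1
          (Finset.mem_Icc.mp hj).2 ⟨AddSubgroup.zsmul_mem_zmultiples _ _, hprev⟩)
      · exact absurd hprev (hout j hj hjJ))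
    hsum
  obtain ⟨j₀, hj₀, hj₀J⟩ := Finset.exists_of_ssubset hJ
  have hj₀k : j₀ - 1 ≤ k := (Nat.sub_le j₀ 1).trans (Finset.mem_Icc.mp hj₀).2
  exact hout j₀ hj₀ hj₀J
    (hH (Set.mem_Iic.mpr (Nat.zero_le k)) hj₀k (Nat.zero_le _) (hterms j₀ hj₀))

/-- Lemma 5.2(B): under conditions (a_j), (b_j), (c_j), if `a ∈ Q_{π₀}^m`, `J` is a
proper subset of `{1,…,k}`, `|l| ≤ k` and
`l·g₀ ∈ ⟨{g_j : j ∈ J}⟩ + Q_{π₀}^m` where `g₀ = a − (g₁ + ⋯ + g_k)`, then `l = 0`. -/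
theorem stmt_7 (m : ℕ) (s : ℤ) (k : ℕ) (hk : 0 < k)
    (g : ℕ → Fin m → ℚ) (π : ℕ → Finset ℕ)
    (hπ : ∀ j ≤ k, ∀ p ∈ π j, Nat.Prime p)
    (hmono : ∀ j < k, π j ⊆ π (j + 1))
    (ha : ∀ j, 1 ≤ j → j ≤ k → g j ∈ QpiVec m (π j))
    (hb : ∀ j, 1 ≤ j → j ≤ k →
      (AddSubgroup.zmultiples (g j) : Set (Fin m → ℚ)) ∩ QpiVec m (π (j - 1)) ⊆ intVec m s)
    (hc : ∀ j, 1 ≤ j → j ≤ k → ∀ n : ℤ, n ≠ 0 → |n| ≤ (k : ℤ) →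
      n • g j ∉ QpiVec m (π (j - 1)))
    (a : Fin m → ℚ) (haπ : a ∈ QpiVec m (π 0))
    (J : Finset ℕ) (hJ : J ⊂ Finset.Icc 1 k)
    (l : ℤ) (hl : |l| ≤ (k : ℤ))
    (g₀ : Fin m → ℚ) (hg₀ : g₀ = a - ∑ j ∈ Finset.Icc 1 k, g j)
    (hmem : l • g₀ ∈
      (AddSubgroup.closure {x : Fin m → ℚ | ∃ j ∈ J, x = g j} : Set (Fin m → ℚ))
        + QpiVec m (π 0)) :
    l = 0 :=
  stmt_7_general m s k g π hmono ha hb hc a haπ J hJ l hl g₀ hg₀ hmem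
end

section
/- Let G be a wide subgroup of ℚ^m (i.e., ℤ^m ⊆ G and G is not contained in Q_π^m for any finite set π of primes). Then for every finite set π of primes, every k ∈ ℕ \ {0} and every s ∈ ℤ \ {0}, there exists g ∈ G such that (i) ⟨g⟩ ∩ Q_π^m ⊆ (sℤ)^m, and (ii) l·g ∉ Q_π^m for every nonzero integer l with |l| ≤ k. -/
/-!
Enlarge `π` by the primes `≤ k` and the prime divisors of `s`; wideness yields `x ∈ G` and a
prime `p` outside this enlarged set dividing the denominator of some coordinate `x i`. Let `D`
be the prime-to-`p` part of the denominators of `x`, so that `D • x` has only `p`-power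
denominators, and take `g = s • D • x`. A multiple of `g` with no `p` in its denominators is
then integral, and, as `p ∤ s`, even a multiple of `s`. For `0 < |l| ≤ k` the integer `l * s * D`
is prime to `p`, so `p` still divides the denominator of `(l • g) i`.
-/

open Pointwise

namespace Rat

theorem den_intCast_mul_dvd (n : ℤ) (q : ℚ) : ((n : ℚ) * q).den ∣ q.den := by
  simpa using mul_den_dvd (n : ℚ) q

theorem den_dvd_natAbs_mul_den_intCast_mul {n : ℤ} (hn : n ≠ 0) (q : ℚ) :
    q.den ∣ n.natAbs * ((n : ℚ) * q).den := by
  have hq : q = (n : ℚ)⁻¹ * ((n : ℚ) * q) := by field_simp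
  calc q.den = ((n : ℚ)⁻¹ * ((n : ℚ) * q)).den := congrArg den hq
    _ ∣ (n : ℚ)⁻¹.den * ((n : ℚ) * q).den := mul_den_dvd _ _
    _ = n.natAbs * ((n : ℚ) * q).den := by rw [inv_intCast_den, if_neg hn]

theorem den_dvd_of_natCast_mul_eq_intCast {n : ℕ} {q : ℚ} {z : ℤ} (h : (n : ℚ) * q = z) :
    q.den ∣ n := by
  rcases eq_or_ne n 0 with rfl | hn
  · exact dvd_zero _
  have hq : q = divInt z n := by
    rw [divInt_eq_div, ← h]; push_cast; field_simp
  exact_mod_cast hq ▸ den_dvd z n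

theorem prime_dvd_den_intCast_mul {p : ℕ} (hp : p.Prime) {n : ℤ} (hpn : ¬ p ∣ n.natAbs)
    {q : ℚ} (hpq : p ∣ q.den) : p ∣ ((n : ℚ) * q).den := by
  have hn : n ≠ 0 := by rintro rfl; exact hpn (dvd_zero p)
  exact (hp.dvd_mul.mp (hpq.trans (den_dvd_natAbs_mul_den_intCast_mul hn q))).resolve_left hpn

theorem den_eq_one_of_den_intCast_mul_eq_one {p a : ℕ} (hp : p.Prime) {n : ℤ}
    (hpn : ¬ p ∣ n.natAbs) {q : ℚ} (hq : q.den ∣ p ^ a) (h : ((n : ℚ) * q).den = 1) :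
    q.den = 1 := by
  have hn : n ≠ 0 := by rintro rfl; exact hpn (dvd_zero p)
  have hdvd : q.den ∣ n.natAbs := by
    simpa [h] using den_dvd_natAbs_mul_den_intCast_mul hn q
  exact Nat.eq_one_of_dvd_coprimes (((hp.coprime_iff_not_dvd).mpr hpn).pow_left a) hq hdvd

end Rat

theorem exists_not_dvd_den_natCast_mul_dvd_pow {ι : Type*} [Fintype ι] (x : ι → ℚ) {p : ℕ}
    (hp : p.Prime) : ∃ D a : ℕ, ¬ p ∣ D ∧ ∀ j, ((D : ℚ) * x j).den ∣ p ^ a := by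
  set N := ∏ j, (x j).den
  have hN : N ≠ 0 := Finset.prod_ne_zero_iff.mpr fun j _ => (x j).den_nz
  refine ⟨ordCompl[p] N, N.factorization p, Nat.not_dvd_ordCompl hp hN, fun j => ?_⟩
  obtain ⟨c, hc⟩ : (x j).den ∣ N := Finset.dvd_prod_of_mem (fun j => (x j).den) (Finset.mem_univ j)
  refine Rat.den_dvd_of_natCast_mul_eq_intCast (z := c * (x j).num) ?_
  have hsplit : ((p ^ N.factorization p : ℕ) : ℚ) * (ordCompl[p] N : ℕ) = (x j).den * c := by
    exact_mod_cast (Nat.ordProj_mul_ordCompl_eq_self N p).trans hc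
  calc ((p ^ N.factorization p : ℕ) : ℚ) * ((ordCompl[p] N : ℕ) * x j)
      = c * ((x j).den * x j) := by rw [← mul_assoc, hsplit]; ring
    _ = ((c * (x j).num : ℤ) : ℚ) := by rw [Rat.den_mul_eq_num]; push_cast; ring

theorem den_eq_one_of_mem_QpiSet_of_den_dvd_pow {π : Finset ℕ} {p a : ℕ} (hp : p.Prime)
    (hpπ : p ∉ π) {q : ℚ} (hq : q ∈ QpiSet π) (hden : q.den ∣ p ^ a) : q.den = 1 := by
  obtain ⟨b, -, hb⟩ := (Nat.dvd_prime_pow hp).mp hden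
  rcases b with _ | b
  · simpa using hb
  · exact absurd (hq p hp (hb ▸ dvd_pow_self p b.succ_ne_zero)) hpπ

theorem exists_prime_dvd_den_of_notMem_QpiVec {m : ℕ} {π : Finset ℕ} {x : Fin m → ℚ}
    (hx : x ∉ QpiVec m π) : ∃ i p, p.Prime ∧ p ∣ (x i).den ∧ p ∉ π := by
  simpa [QpiVec, QpiSet] using hx

theorem exists_prime_dvd_den_of_wide {m : ℕ} {G : AddSubgroup (Fin m → ℚ)}
    (hwide : ∀ π : Finset ℕ, (∀ p ∈ π, p.Prime) → ∃ x ∈ G, x ∉ QpiVec m π)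
    {π : Finset ℕ} (hπ : ∀ p ∈ π, p.Prime) (k : ℕ) {s : ℤ} (hs : s ≠ 0) :
    ∃ x ∈ G, ∃ i p, p.Prime ∧ p ∣ (x i).den ∧ p ∉ π ∧ k < p ∧ ¬ p ∣ s.natAbs := by
  obtain ⟨x, hxG, hx⟩ :=
    hwide (π ∪ {p ∈ Finset.range (k + 1) | p.Prime} ∪ s.natAbs.primeFactors) (by
      simp only [Finset.mem_union, Finset.mem_filter]
      rintro p ((hp | hp) | hp)
      exacts [hπ p hp, hp.2, Nat.prime_of_mem_primeFactors hp])
  obtain ⟨i, p, hp, hpx, hpπ⟩ := exists_prime_dvd_den_of_notMem_QpiVec hx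
  simp only [Finset.mem_union, Finset.mem_filter, Finset.mem_range, Nat.mem_primeFactors,
    not_or, not_and, Int.natAbs_ne_zero] at hpπ
  exact ⟨x, hxG, i, p, hp, hpx, hpπ.1.1, by by_contra h; exact hpπ.1.2 (by omega) hp,
    fun h => hpπ.2 hp h hs⟩

theorem zsmul_notMem_QpiVec {m : ℕ} {π : Finset ℕ} {p : ℕ} (hp : p.Prime) (hpπ : p ∉ π)
    {x : Fin m → ℚ} {i : Fin m} (hpx : p ∣ (x i).den) {n : ℤ} (hpn : ¬ p ∣ n.natAbs) :
    n • x ∉ QpiVec m π := fun h =>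
  hpπ (h i p hp (by simpa only [Pi.smul_apply, zsmul_eq_mul]
    using Rat.prime_dvd_den_intCast_mul hp hpn hpx))

theorem zmultiples_zsmul_inter_QpiVec_subset_intVec {m : ℕ} {π : Finset ℕ} {p a : ℕ}
    (hp : p.Prime) (hpπ : p ∉ π) {s : ℤ} (hps : ¬ p ∣ s.natAbs) {y : Fin m → ℚ}
    (hy : ∀ j, (y j).den ∣ p ^ a) :
    (AddSubgroup.zmultiples (s • y) : Set (Fin m → ℚ)) ∩ QpiVec m π ⊆ intVec m s := by
  rintro v ⟨hvg, hv⟩ j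
  obtain ⟨n, rfl⟩ := AddSubgroup.mem_zmultiples_iff.mp hvg
  have hvj : (n • s • y) j = s * (n * y j) := by
    rw [smul_smul, Pi.smul_apply, zsmul_eq_mul]; push_cast; ring
  have hu : ((n : ℚ) * y j).den ∣ p ^ a := (Rat.den_intCast_mul_dvd n _).trans (hy j)
  have hsu : ((s : ℚ) * (n * y j)).den = 1 := den_eq_one_of_mem_QpiSet_of_den_dvd_pow hp hpπ
    (hvj ▸ hv j) ((Rat.den_intCast_mul_dvd s _).trans hu)
  refine ⟨((n : ℚ) * y j).num, hvj.trans ?_⟩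
  rw [(Rat.den_eq_one_iff _).mp (Rat.den_eq_one_of_den_intCast_mul_eq_one hp hps hu hsu)]

theorem stmt_8_general (m : ℕ) (G : AddSubgroup (Fin m → ℚ))
    (hwide : ∀ π : Finset ℕ, (∀ p ∈ π, Nat.Prime p) → ∃ x ∈ G, x ∉ QpiVec m π)
    (π : Finset ℕ) (hπ : ∀ p ∈ π, Nat.Prime p)
    (k : ℕ) (s : ℤ) (hs : s ≠ 0) :
    ∃ g ∈ G,
      ((AddSubgroup.zmultiples g : Set (Fin m → ℚ)) ∩ QpiVec m π ⊆ intVec m s) ∧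
      ∀ l : ℤ, l ≠ 0 → |l| ≤ (k : ℤ) → l • g ∉ QpiVec m π := by
  obtain ⟨x, hxG, i, p, hp, hpx, hpπ, hkp, hps⟩ := exists_prime_dvd_den_of_wide hwide hπ k hs
  obtain ⟨D, a, hpD, hD⟩ := exists_not_dvd_den_natCast_mul_dvd_pow x hp
  have hDx : ∀ j, (((D : ℤ) • x) j).den ∣ p ^ a := fun j => by
    simpa only [Pi.smul_apply, zsmul_eq_mul, Int.cast_natCast] using hD j
  refine ⟨s • (D : ℤ) • x, G.zsmul_mem (G.zsmul_mem hxG _) _,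
    zmultiples_zsmul_inter_QpiVec_subset_intVec hp hpπ hps hDx, fun l hl hlk => ?_⟩
  have hpl : ¬ p ∣ l.natAbs := Nat.not_dvd_of_pos_of_lt (Int.natAbs_pos.mpr hl)
    (by rw [Int.abs_eq_natAbs] at hlk; omega)
  rw [smul_smul, smul_smul]
  refine zsmul_notMem_QpiVec hp hpπ hpx ?_
  simp only [Int.natAbs_mul, Int.natAbs_natCast, hp.dvd_mul, not_or]
  exact ⟨⟨hpl, hps⟩, hpD⟩

/-- Lemma 6.2: if `G` is a wide subgroup of `ℚ^m`, then for every finite set `π` of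
primes, `k ∈ ℕ \ {0}` and `s ∈ ℤ \ {0}` there is `g ∈ G` with
`⟨g⟩ ∩ Q_π^m ⊆ (sℤ)^m` and `l·g ∉ Q_π^m` for all nonzero integers `l` with `|l| ≤ k`. -/
theorem stmt_8 (m : ℕ) (hm : 0 < m) (G : AddSubgroup (Fin m → ℚ))
    (hZ : ∀ v : Fin m → ℚ, (∀ i, ∃ z : ℤ, v i = (z : ℚ)) → v ∈ G)
    (hwide : ∀ π : Finset ℕ, (∀ p ∈ π, Nat.Prime p) → ∃ x ∈ G, x ∉ QpiVec m π)
    (π : Finset ℕ) (hπ : ∀ p ∈ π, Nat.Prime p)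
    (k : ℕ) (hk : k ≠ 0) (s : ℤ) (hs : s ≠ 0) :
    ∃ g ∈ G,
      ((AddSubgroup.zmultiples g : Set (Fin m → ℚ)) ∩ QpiVec m π ⊆ intVec m s) ∧
      ∀ l : ℤ, l ≠ 0 → |l| ≤ (k : ℤ) → l • g ∉ QpiVec m π :=
  stmt_8_general m G hwide π hπ k s hs
end
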